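/- If B₁ and B₂ are two left braces with the same additive group A and φ: B₁ → B₂ is a brace isomorphism, then the corresponding regular subgroups {(g, λ^{(1)}_g)} and {(g, λ^{(2)}_g)} of Hol(A) are conjugate by the element (0, φ) ∈ Hol(A). -/

import Mathlib

/-- The multiplicative group structure on `AddAut A` (composition), as in the older Mathlib,
where `AddAut A` was a multiplicative group; it is now an additive group. -/
instance addAutMulGroup (A : Type*) [Add A] : Group (AddAut A) where
  mul g h := AddEquiv.trans h g
  one := AddEquiv.refl _
  inv := AddEquiv.symm
  mul_assoc _ _ _ := rfl
  one_mul _ := rfl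
  mul_one _ := rfl
  inv_mul_cancel := AddEquiv.self_trans_symm

def holAction (A : Type*) [AddCommGroup A] : AddAut A →* MulAut (Multiplicative A) where
  toFun f := AddEquiv.toMultiplicative f
  map_one' := rfl
  map_mul' _ _ := rfl

/-- The holomorph `Hol(A) = A ⋊ Aut(A)` of an additive abelian group `A`. -/
abbrev Hol (A : Type*) [AddCommGroup A] :=
  SemidirectProduct (Multiplicative A) (AddAut A) (holAction A)

namespace Hol

variable {A : Type*} [AddCommGroup A]

theorem conj_mk_zero (φ : AddAut A) (g : A) (f : AddAut A) :
    (⟨Multiplicative.ofAdd 0, φ⟩ : Hol A) * ⟨Multiplicative.ofAdd g, f⟩ *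
        (⟨Multiplicative.ofAdd 0, φ⟩ : Hol A)⁻¹ =
      ⟨Multiplicative.ofAdd (φ g), φ * f * φ⁻¹⟩ := by
  ext
  · change 0 + φ g + φ (f (φ.symm (-0))) = φ g
    simp
  · rfl

end Hol

theorem AddAut.conj_lam_eq_of_brace_hom {A : Type*} [AddCommGroup A]
    (lam1 lam2 : A → AddAut A) (φ : AddAut A)
    (hφ : ∀ a b : A, φ (a + lam1 a b) = φ a + lam2 (φ a) (φ b)) (g : A) :
    φ * lam1 g * φ⁻¹ = lam2 (φ g) := by
  ext h
  change φ (lam1 g (φ.symm h)) = lam2 (φ g) h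
  have := hφ g (φ.symm h)
  rwa [map_add, AddEquiv.apply_symm_apply, add_right_inj] at this

theorem stmt4_general (A : Type*) [AddCommGroup A]
    (lam1 lam2 : A → AddAut A)
    -- `φ` is a brace isomorphism from `B₁` to `B₂`:
    (φ : AddAut A) (hφ : ∀ a b : A, φ (a + lam1 a b) = φ a + lam2 (φ a) (φ b)) :
    (fun x : Hol A => (⟨Multiplicative.ofAdd 0, φ⟩ : Hol A) * x *
        (⟨Multiplicative.ofAdd 0, φ⟩ : Hol A)⁻¹) ''
      {x : Hol A | ∃ g : A, x = ⟨Multiplicative.ofAdd g, lam1 g⟩} =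
    {x : Hol A | ∃ g : A, x = ⟨Multiplicative.ofAdd g, lam2 g⟩} ∧
    ∀ g : A, (⟨Multiplicative.ofAdd 0, φ⟩ : Hol A) * ⟨Multiplicative.ofAdd g, lam1 g⟩ *
        (⟨Multiplicative.ofAdd 0, φ⟩ : Hol A)⁻¹ =
      ⟨Multiplicative.ofAdd (φ g), lam2 (φ g)⟩ := by
  have conj_eq : ∀ g : A, (⟨Multiplicative.ofAdd 0, φ⟩ : Hol A) *
      ⟨Multiplicative.ofAdd g, lam1 g⟩ * (⟨Multiplicative.ofAdd 0, φ⟩ : Hol A)⁻¹ =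
        ⟨Multiplicative.ofAdd (φ g), lam2 (φ g)⟩ := fun g => by
    rw [Hol.conj_mk_zero, AddAut.conj_lam_eq_of_brace_hom lam1 lam2 φ hφ]
  refine ⟨Set.ext fun x => ⟨?_, ?_⟩, conj_eq⟩
  · rintro ⟨_, ⟨g, rfl⟩, rfl⟩
    exact ⟨φ g, conj_eq g⟩
  · rintro ⟨g, rfl⟩
    refine ⟨_, ⟨φ.symm g, rfl⟩, ?_⟩
    simpa using conj_eq (φ.symm g)

/-- If `B₁` and `B₂` are two left braces with the same additive group `A`
(encoded by their lambda maps `lam1, lam2 : A → AddAut A`, the products being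
`a ·ᵢ b = a + lamᵢ a b`) and `φ : B₁ → B₂` is a brace isomorphism (an additive
automorphism of `A` that is multiplicative for the two products), then the corresponding
regular subgroups `{(g, λ¹_g)}` and `{(g, λ²_g)}` of `Hol(A)` are conjugate by
`(0, φ) ∈ Hol(A)`. -/
theorem stmt4 (A : Type*) [AddCommGroup A]
    (lam1 lam2 : A → AddAut A)
    -- `B₁ = (A, ·₁)` is a left brace with additive group `A`:
    (h1one : lam1 0 = 1) (h1 : ∀ a b : A, lam1 (a + lam1 a b) = lam1 a * lam1 b)
    -- `B₂ = (A, ·₂)` is a left brace with additive group `A`: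
    (h2one : lam2 0 = 1) (h2 : ∀ a b : A, lam2 (a + lam2 a b) = lam2 a * lam2 b)
    -- `φ` is a brace isomorphism from `B₁` to `B₂`:
    (φ : AddAut A) (hφ : ∀ a b : A, φ (a + lam1 a b) = φ a + lam2 (φ a) (φ b)) :
    (fun x : Hol A => (⟨Multiplicative.ofAdd 0, φ⟩ : Hol A) * x *
        (⟨Multiplicative.ofAdd 0, φ⟩ : Hol A)⁻¹) ''
      {x : Hol A | ∃ g : A, x = ⟨Multiplicative.ofAdd g, lam1 g⟩} =
    {x : Hol A | ∃ g : A, x = ⟨Multiplicative.ofAdd g, lam2 g⟩} ∧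
    ∀ g : A, (⟨Multiplicative.ofAdd 0, φ⟩ : Hol A) * ⟨Multiplicative.ofAdd g, lam1 g⟩ *
        (⟨Multiplicative.ofAdd 0, φ⟩ : Hol A)⁻¹ =
      ⟨Multiplicative.ofAdd (φ g), lam2 (φ g)⟩ :=
  stmt4_general A lam1 lam2 φ hφ
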